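/- In the canonical 3D drawing of an n-vertex rooted tree, for any vertex v, the canonical drawing of T(v) occupies a box of height exactly |T(v)| − 1 in the z-direction: the z-coordinates of the vertices of T(v) form a set of |T(v)| consecutive-range integers contained in [z(v), z(v) + |T(v)| − 1], where z(v) is the z-coordinate of v. -/

import Mathlib

/-- Rooted trees. -/
inductive RTree where
  | node : List RTree → RTree

/-- Number of vertices. -/
def RTree.size : RTree → ℕ
  | .node ts => 1 + (ts.attach.map (fun x => RTree.size x.1)).sum
decreasing_by
  have := List.sizeOf_lt_of_mem x.2
  simp [RTree.node.sizeOf_spec]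
  omega

/-- Rooted pathwidth. -/
def RTree.rpw : RTree → ℕ
  | .node ts =>
    let ks := ts.attach.map (fun x => RTree.rpw x.1)
    let k := ks.foldr max 0
    if ks.count k = 1 then k else k + 1
decreasing_by
  have := List.sizeOf_lt_of_mem x.2
  simp [RTree.node.sizeOf_spec]
  omega

/-- The canonical 3D drawing `C(T)`, as the list of the integer positions
`(x, y, z)` of the vertices (root first, at the origin): the heavy child `c`
(a child of maximum rooted pathwidth) continues the heavy path, translated by
`(0, 0, |T| − |T(c)|)`; the light children are placed at `x`-offset `1` and
stacked vertically starting at `z`-offset `1`, consecutive light subtrees being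
shifted by the sizes of the previous ones; light subtrees are drawn recursively. -/
def RTree.posList : RTree → List (ℤ × ℤ × ℤ)
  | .node ts =>
    match h : ts.dropWhile (fun t => t.rpw ≠ (ts.map RTree.rpw).foldr max 0) with
    | [] => [(0, 0, 0)]
    | c :: rest =>
      let lights := ts.takeWhile (fun t => t.rpw ≠ (ts.map RTree.rpw).foldr max 0)
        ++ rest
      let zs : List ℕ := (lights.map RTree.size).scanl (· + ·) 1
      (0, 0, 0) ::
        ((RTree.posList c).map (fun p =>
          (p.1, p.2.1, p.2.2 + ((RTree.size (.node ts) : ℤ) - (RTree.size c : ℤ)))) ++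
        (lights.attach.zip zs).flatMap (fun x =>
          (RTree.posList x.1.1).map (fun p =>
            (p.1 + 1, p.2.1, p.2.2 + (x.2 : ℤ)))))
decreasing_by
  · have hc : c ∈ ts :=
      (List.dropWhile_sublist _).mem (h ▸ List.mem_cons_self (a := c) (l := rest))
    have := List.sizeOf_lt_of_mem hc
    simp [RTree.node.sizeOf_spec]
    omega
  · have hmem : x.1.1 ∈ ts := by
      have h1 := x.1.2
      rcases List.mem_append.mp h1 with ha | hb
      · exact (List.takeWhile_sublist _).mem ha
      · exact (List.dropWhile_sublist _).mem (h ▸ List.mem_cons_of_mem c hb)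
    have := List.sizeOf_lt_of_mem hmem
    simp [RTree.node.sizeOf_spec]
    omega

section
set_option linter.unusedTactic false
set_option linter.unnecessarySimpa false

lemma size_node (ts : List RTree) : (RTree.node ts).size = 1 + (ts.map RTree.size).sum := by
  rw [RTree.size]
  congr 1
  exact congrArg List.sum (List.attach_map_val (l := ts) (f := RTree.size))

lemma foldr_max_mem : ∀ (l : List ℕ), l ≠ [] → l.foldr max 0 ∈ l
  | a :: l, _ => by
    rcases eq_or_ne l [] with rfl | hl
    · simp
    · rcases max_choice a (l.foldr max 0) with h | h <;> simp only [List.foldr, h]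
      · exact List.mem_cons_self
      · exact List.mem_cons_of_mem _ (foldr_max_mem l hl)

lemma int_shift_range (a n : ℕ) :
    ((List.range n).map Int.ofNat).map (fun v => v + (a : ℤ)) =
      (List.range' a n).map Int.ofNat := by
  have : List.range' a n = (List.range n).map (a + ·) := by
    rw [List.range_eq_range']
    simpa using (List.map_add_range' (a := a) 0 n 1).symm
  rw [this, List.map_map, List.map_map]
  apply List.map_congr_left
  intro i _
  simp [Int.ofNat_eq_natCast]
  push_cast
  ring

lemma attach_zip_flatMap {α γ : Type*} (f : α → ℕ → List γ) :
    ∀ (l : List α) (zs : List ℕ),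
    (l.attach.zip zs).flatMap (fun x => f x.1.1 x.2)
      = (l.zip zs).flatMap (fun x => f x.1 x.2)
  | [], zs => by simp
  | a :: l, [] => by simp
  | a :: l, z :: zs => by
    simp only [List.attach_cons, List.zip_cons_cons, List.flatMap_cons,
      List.zip_map_left, List.flatMap_map]
    rw [← attach_zip_flatMap f l zs]
    rfl

lemma stack_perm : ∀ (L : List RTree) (a : ℕ),
    (∀ t ∈ L, (t.posList.map (fun p => p.2.2)).Perm ((List.range t.size).map Int.ofNat)) →
    ((L.zip ((L.map RTree.size).scanl (· + ·) a)).flatMap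
      (fun x => (x.1.posList.map (fun p => p.2.2)).map (fun v => v + (x.2 : ℤ)))).Perm
    ((List.range' a (L.map RTree.size).sum).map Int.ofNat)
  | [], a, _ => by simp
  | t :: L, a, IH => by
    simp only [List.map_cons, List.scanl_cons, List.zip_cons_cons, List.flatMap_cons,
      List.sum_cons, List.singleton_append]
    have h1 : ((t.posList.map (fun p => p.2.2)).map (fun v => v + (a : ℤ))).Perm
        ((List.range' a t.size).map Int.ofNat) := by
      rw [← int_shift_range]
      exact (IH t List.mem_cons_self).map _
    have h2 := stack_perm L (a + t.size) (fun s hs => IH s (List.mem_cons_of_mem _ hs))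
    refine (h1.append h2).trans ?_
    rw [← List.map_append, List.range'_append_1]

lemma zperm_aux (n : ℕ) : ∀ (T : RTree), sizeOf T ≤ n →
    (T.posList.map (fun p => p.2.2)).Perm ((List.range T.size).map Int.ofNat) := by
  induction n with
  | zero =>
    intro T h
    cases T with
    | node ts => simp [RTree.node.sizeOf_spec] at h
  | succ n ihn =>
    intro T hn
    cases T with
    | node ts =>
    have hsz : ∀ t ∈ ts, sizeOf t ≤ n := by
      intro t ht
      have := List.sizeOf_lt_of_mem ht
      simp [RTree.node.sizeOf_spec] at hn
      omega
    have IH : ∀ t ∈ ts, (t.posList.map (fun p => p.2.2)).Perm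
        ((List.range t.size).map Int.ofNat) :=
      fun t ht => ihn t (hsz t ht)
    rw [RTree.posList.eq_def]
    dsimp only
    split
    · -- dropWhile = []
      rename_i h
      have hts : ts = [] := by
        by_contra hne
        have hmem := foldr_max_mem (ts.map RTree.rpw) (by simpa using hne)
        obtain ⟨t, ht, hrt⟩ := List.mem_map.mp hmem
        have := List.dropWhile_eq_nil_iff.mp h t ht
        simp at this
        exact absurd hrt this
      subst hts
      simp [size_node, List.range_succ]
    · -- dropWhile = c :: rest
      rename_i c rest h
      have hts : ts = ts.takeWhile (fun t => t.rpw ≠ (ts.map RTree.rpw).foldr max 0)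
          ++ c :: rest := by
        conv_lhs => rw [← List.takeWhile_append_dropWhile
          (p := fun t => decide (t.rpw ≠ (ts.map RTree.rpw).foldr max 0)) (l := ts)]
        rw [h]
      set lights := ts.takeWhile (fun t => t.rpw ≠ (ts.map RTree.rpw).foldr max 0) ++ rest
        with hlights
      have hc : c ∈ ts := by rw [hts]; exact List.mem_append_right _ List.mem_cons_self
      have hlmem : ∀ t ∈ lights, t ∈ ts := by
        intro t ht
        rw [hts]
        rcases List.mem_append.mp ht with ha | hb
        · exact List.mem_append_left _ ha
        · exact List.mem_append_right _ (List.mem_cons_of_mem _ hb)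
      have hsum : ((RTree.node ts).size : ℕ) = 1 + ((lights.map RTree.size).sum + c.size) := by
        rw [size_node, hts, hlights]
        simp [List.sum_append, List.map_append]
        ring
      set S := (lights.map RTree.size).sum with hS
      -- B part: convert attach.zip to zip
      have hattach :
          ((lights.attach.zip (((lights.map RTree.size).scanl (· + ·) 1 : List ℕ))).flatMap
            (fun x => (RTree.posList x.1.1).map (fun p =>
              (p.1 + 1, p.2.1, p.2.2 + (x.2 : ℤ))))) =
          ((lights.zip (((lights.map RTree.size).scanl (· + ·) 1 : List ℕ))).flatMap
            (fun x => (RTree.posList x.1).map (fun p =>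
              (p.1 + 1, p.2.1, p.2.2 + (x.2 : ℤ))))) :=
        attach_zip_flatMap (fun t k => (RTree.posList t).map (fun p =>
          (p.1 + 1, p.2.1, p.2.2 + (k : ℤ)))) lights _
      simp only [List.map_cons, List.map_append, List.map_map, hattach]
      -- compute the z-projection of the flatMap
      rw [List.map_flatMap]
      have hA : ((RTree.posList c).map
          ((fun p => p.2.2) ∘ (fun p =>
            (p.1, p.2.1, p.2.2 + ((RTree.size (.node ts) : ℤ) - (RTree.size c : ℤ)))))).Perm
          ((List.range' (1 + S) c.size).map Int.ofNat) := by
        have hD : ((RTree.size (.node ts) : ℤ) - (RTree.size c : ℤ)) = ((1 + S : ℕ) : ℤ) := by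
          rw [hsum]; push_cast; ring
        have : ((RTree.posList c).map
            ((fun p => p.2.2) ∘ (fun p =>
              (p.1, p.2.1, p.2.2 + ((RTree.size (.node ts) : ℤ) - (RTree.size c : ℤ)))))) =
            ((RTree.posList c).map (fun p => p.2.2)).map (fun v => v + ((1 + S : ℕ) : ℤ)) := by
          rw [List.map_map]
          apply List.map_congr_left
          intro p _
          simp [hD]
        rw [this, ← int_shift_range]
        exact (IH c hc).map _
      have hB : ((lights.zip (((lights.map RTree.size).scanl (· + ·) 1 : List ℕ))).flatMap (fun x =>
          ((RTree.posList x.1).map (fun p =>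
            (p.1 + 1, p.2.1, p.2.2 + (x.2 : ℤ)))).map (fun p => p.2.2))).Perm
          ((List.range' 1 S).map Int.ofNat) := by
        have heq : ∀ x : RTree × ℕ,
            ((RTree.posList x.1).map (fun p =>
              (p.1 + 1, p.2.1, p.2.2 + (x.2 : ℤ)))).map (fun p => p.2.2) =
            ((x.1.posList).map (fun p => p.2.2)).map (fun v => v + (x.2 : ℤ)) := by
          intro x; rw [List.map_map, List.map_map]; rfl
        simp only [heq]
        exact stack_perm lights 1 (fun t ht => IH t (hlmem t ht))
      have hrange : List.range ((RTree.node ts).size) = 0 :: List.range' 1 (c.size + S) := by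
        rw [List.range_eq_range', hsum]
        rw [show 1 + (S + c.size) = (c.size + S) + 1 by ring]
        rfl
      rw [hrange, List.map_cons]
      refine List.Perm.cons _ (((hA.append hB).trans List.perm_append_comm).trans ?_)
      rw [← List.map_append,
        show List.range' 1 S ++ List.range' (1 + S) c.size = List.range' 1 (c.size + S) from by
          rw [List.range'_append_1, Nat.add_comm]]
end

/-- in the canonical 3D drawing of a rooted tree `T` (and hence,
by translation, in the relative canonical drawing of any subtree `T(v)`), the
`z`-coordinates of the `|T|` vertices are pairwise distinct integers contained in
the window `[z(root), z(root) + |T| − 1] = [0, |T| − 1]`; hence they form the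
`|T|` consecutive integers of that window of height exactly `|T| − 1`. -/
theorem stmt_14 (T : RTree) :
    (T.posList.map (fun p => p.2.2)).length = T.size ∧
    (T.posList.map (fun p => p.2.2)).Nodup ∧
    ∀ z ∈ T.posList.map (fun p => p.2.2), 0 ≤ z ∧ z ≤ (T.size : ℤ) - 1 := by
  have hp := zperm_aux (sizeOf T) T le_rfl
  refine ⟨?_, ?_, ?_⟩
  · rw [hp.length_eq]; simp
  · rw [hp.nodup_iff]
    exact List.nodup_range.map (fun a b h => Int.ofNat.inj h)
  · intro z hz
    obtain ⟨i, hi, rfl⟩ := List.mem_map.mp (hp.mem_iff.mp hz)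
    rw [List.mem_range] at hi
    simp only [Int.ofNat_eq_natCast]
    omega
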